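/- arXiv:1506.00813 — 2 statements merged into one kernel-verified Lean document; each statement's English description precedes it below -/
import Mathlib

section
/- If n is an even positive integer with n ≥ 2, then the product ∏_{i=1}^{n} C(n, i) is not a perfect square. -/
/-!
Pairing `C(2m, i)` with `C(2m, 2m - i)` writes the product as a square times the central
binomial coefficient `C(2m, m)`. By Bertrand's postulate there is a prime `p` with
`m < p ≤ 2m`; it divides `C(2m, m)`, but `p²` does not since `2m < p²`. Hence `C(2m, m)` is not a
square, and neither is a nonzero square multiple of it.
-/

open Finset Nat

theorem Nat.isSquare_of_isSquare_sq_mul {a b : ℕ} (ha : a ≠ 0) (h : IsSquare (a ^ 2 * b)) :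
    IsSquare b := by
  rw [← Rat.isSquare_natCast_iff] at h ⊢
  obtain ⟨r, hr⟩ := h
  refine ⟨r / a, ?_⟩
  have ha' : (a : ℚ) ≠ 0 := by exact_mod_cast ha
  push_cast at hr
  field_simp
  linear_combination hr

theorem Nat.Prime.not_isSquare_of_dvd_of_not_sq_dvd {p x : ℕ} (hp : p.Prime) (hdvd : p ∣ x)
    (hsq : ¬ p ^ 2 ∣ x) : ¬ IsSquare x := by
  rintro ⟨r, rfl⟩
  have hpr : p ∣ r := (hp.dvd_mul.1 hdvd).elim id id
  exact hsq (pow_two p ▸ mul_dvd_mul hpr hpr)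

theorem Nat.not_isSquare_centralBinom {m : ℕ} (hm : m ≠ 0) : ¬ IsSquare m.centralBinom := by
  obtain ⟨p, hp, hmp, hp2m⟩ := exists_prime_lt_and_le_two_mul m hm
  rw [centralBinom_eq_two_mul_choose]
  refine hp.not_isSquare_of_dvd_of_not_sq_dvd ?_ ?_
  · rw [two_mul]
    exact hp.dvd_choose_add hmp hmp (by omega)
  · rw [hp.pow_dvd_iff_le_factorization (choose_pos (by omega)).ne', not_le, Nat.lt_succ_iff]
    exact factorization_choose_le_one (by nlinarith)

theorem Nat.prod_Icc_choose (n : ℕ) :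
    ∏ i ∈ Icc 1 n, n.choose i = ∏ i ∈ range (n + 1), n.choose i := by
  rw [range_eq_Ico, prod_eq_prod_Ico_succ_bot (Nat.succ_pos n), choose_zero_right, one_mul,
    zero_add, succ_eq_add_one, Ico_add_one_right_eq_Icc]

theorem Nat.prod_Icc_choose_two_mul (m : ℕ) :
    ∏ i ∈ Icc 1 (2 * m), (2 * m).choose i
      = (∏ i ∈ range m, (2 * m).choose i) ^ 2 * m.centralBinom := by
  have hupper : ∏ i ∈ range m, (2 * m).choose (m + 1 + i) = ∏ i ∈ range m, (2 * m).choose i := by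
    rw [← prod_range_reflect]
    refine prod_congr rfl fun i hi => choose_symm_of_eq_add ?_
    have := mem_range.1 hi
    omega
  rw [prod_Icc_choose, show 2 * m + 1 = m + 1 + m by omega, prod_range_add, hupper,
    prod_range_succ, centralBinom_eq_two_mul_choose]
  ring

/-- If `n` is an even positive integer with `n ≥ 2`, then `∏_{i=1}^{n} C(n, i)`
is not a perfect square. -/
theorem stmt_3 (n : ℕ) (hn : 2 ≤ n) (heven : Even n) :
    ¬ IsSquare (∏ i ∈ Finset.Icc 1 n, n.choose i) := by
  obtain ⟨m, rfl⟩ := heven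
  rw [← two_mul, prod_Icc_choose_two_mul]
  intro hsq
  have hprod : ∏ i ∈ range m, (2 * m).choose i ≠ 0 :=
    prod_ne_zero_iff.2 fun i hi => (choose_pos (by have := mem_range.1 hi; omega)).ne'
  exact not_isSquare_centralBinom (by omega) (isSquare_of_isSquare_sq_mul hprod hsq)
end

section
/- For every positive integer m ≥ 1, the central binomial coefficient C(2m, m) is not a perfect square. -/
/-- For `m ≥ 1`, the central binomial coefficient `C(2m, m)` is not a perfect square. -/
theorem stmt_4 (m : ℕ) (hm : 1 ≤ m) : ¬ IsSquare ((2 * m).choose m) := by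
  rintro ⟨r, hr⟩
  -- Bertrand: there is a prime p with m < p ≤ 2m
  obtain ⟨p, hp, hmp, hp2m⟩ := Nat.exists_prime_lt_and_le_two_mul m (by omega)
  -- the p-adic valuation of C(2m, m) is exactly 1
  have hC := hr
  have hle : ((2 * m).choose m).factorization p ≤ 1 := by
    apply Nat.factorization_choose_le_one
    calc 2 * m < 2 * p := by omega
      _ ≤ p * p := by
          have := hp.two_le; exact Nat.mul_le_mul_right p this
      _ = p ^ 2 := (sq p).symm
  have hmn : m ≤ 2 * m := by omega
  have hdvd : p ∣ (2 * m).choose m := by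
    have h1 : p ∣ (2 * m).factorial := Nat.dvd_factorial hp.pos hp2m
    have h2 : ¬ p ∣ m.factorial * (2 * m - m).factorial := by
      have h3 : ¬ p ∣ m.factorial := by
        intro h
        have : p ≤ m := (Nat.Prime.dvd_factorial hp).mp h
        omega
      have : 2 * m - m = m := by omega
      rw [this]
      exact fun h => (hp.dvd_mul.mp h).elim h3 h3
    have key : (2 * m).choose m * (m.factorial * (2 * m - m).factorial) = (2 * m).factorial := by
      rw [← mul_assoc]; exact Nat.choose_mul_factorial_mul_factorial hmn
    rcases (hp.dvd_mul.mp (key ▸ h1)) with h | h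
    · exact h
    · exact absurd h h2
  have hCpos : 0 < (2 * m).choose m := Nat.choose_pos hmn
  have h1le : 1 ≤ ((2 * m).choose m).factorization p :=
    (Nat.Prime.factorization_pos_of_dvd hp hCpos.ne' hdvd)
  have heq1 : ((2 * m).choose m).factorization p = 1 := le_antisymm hle h1le
  -- but a square has even valuation
  have hr0 : r ≠ 0 := by
    intro h; rw [h, mul_zero] at hr; omega
  have : ((2 * m).choose m).factorization p = 2 * r.factorization p := by
    rw [hr, Nat.factorization_mul hr0 hr0]; simp [two_mul]
  omega
end
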